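/- arXiv:2507.00060 — 2 statements merged into one kernel-verified Lean document; each statement's English description precedes it below -/
import Mathlib

section
/- A net (A_i) of star bodies in ℝ^d converges to a star body A in the radial Wijsman topology (i.e. d_r(x,A_i) → d_r(x,A) for every x ∈ ℝ^d) if and only if the radial functions ρ_{A_i} converge pointwise on S^{d-1} to ρ_A (in [0,∞]). -/
open scoped ENNReal

noncomputable section

/-- Radial function of a set `A ⊆ ℝ^d` in direction `θ`. -/
def radialFn {d : ℕ} (A : Set (EuclideanSpace ℝ (Fin d)))
    (θ : EuclideanSpace ℝ (Fin d)) : ℝ≥0∞ :=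
  sSup (ENNReal.ofReal '' {r : ℝ | 0 ≤ r ∧ r • θ ∈ A})

/-- A star set: nonempty and closed under scaling by `t ∈ [0,1]`. -/
def IsStarSet {d : ℕ} (A : Set (EuclideanSpace ℝ (Fin d))) : Prop :=
  A.Nonempty ∧ ∀ a ∈ A, ∀ t : ℝ, 0 ≤ t → t ≤ 1 → t • a ∈ A

/-- A star body: a radially closed star set. -/
def IsStarBody {d : ℕ} (A : Set (EuclideanSpace ℝ (Fin d))) : Prop :=
  IsStarSet A ∧ ∀ θ : EuclideanSpace ℝ (Fin d), ‖θ‖ = 1 → radialFn A θ ≠ ⊤ →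
    (radialFn A θ).toReal • θ ∈ A

open scoped Classical in
/-- The radial distance from a point `x` to a star body `A`:
`0` if `x ∈ A`, and `‖x‖ - ρ_A(x/‖x‖)` otherwise. -/
def radialDist {d : ℕ} (x : EuclideanSpace ℝ (Fin d))
    (A : Set (EuclideanSpace ℝ (Fin d))) : ℝ :=
  if x ∈ A then 0 else ‖x‖ - (radialFn A (‖x‖⁻¹ • x)).toReal

/-!
For a star body `A`, the radial distance along a ray is the truncated difference
`d_r(s θ, A) = s - ρ_A(θ)` in `[0, ∞]`. Radial Wijsman convergence therefore says that
`c - ρ_{A_i}(θ) → c - ρ_A(θ)` for every unit `θ` and every finite `c`, and in `[0, ∞]` these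
truncated differences detect convergence: a finite `c` strictly between a bound and the limit
separates the two.
-/

open Filter Topology

theorem ENNReal.tendsto_iff_forall_tendsto_sub_left {ι : Type*} {l : Filter ι} {f : ι → ℝ≥0∞}
    {a : ℝ≥0∞} :
    Tendsto f l (𝓝 a) ↔ ∀ c ≠ ⊤, Tendsto (fun i => c - f i) l (𝓝 (c - a)) := by
  refine ⟨fun h c hc => ((ENNReal.continuous_sub_left hc).tendsto a).comp h, fun h => ?_⟩
  refine tendsto_order.2 ⟨fun b hb => ?_, fun b hb => ?_⟩
  · obtain ⟨c, hbc, hca⟩ := exists_between hb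
    have hlim : Tendsto (fun i => c - f i) l (𝓝 0) := by
      simpa [tsub_eq_zero_of_le hca.le] using h c hca.ne_top
    filter_upwards [hlim.eventually (gt_mem_nhds (tsub_pos_of_lt hbc))] with i hi
    exact lt_of_tsub_lt_tsub_left hi
  · obtain ⟨c, hac, hcb⟩ := exists_between hb
    filter_upwards [(h c hcb.ne_top).eventually (lt_mem_nhds (tsub_pos_of_lt hac))] with i hi
    exact (tsub_pos_iff_lt.1 hi).trans hcb

theorem forall_polar_iff {E : Type*} [NormedAddCommGroup E] [NormedSpace ℝ E]
    {Q : ℝ≥0∞ → E → Prop} (hQ : ∀ θ, Q 0 θ) :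
    (∀ x : E, Q (ENNReal.ofReal ‖x‖) (‖x‖⁻¹ • x)) ↔ ∀ θ : E, ‖θ‖ = 1 → ∀ c ≠ ⊤, Q c θ := by
  refine ⟨fun h θ hθ c hc => ?_, fun h x => ?_⟩
  · rcases eq_or_ne c 0 with rfl | hc0
    · exact hQ θ
    have hpos : 0 < c.toReal := ENNReal.toReal_pos hc0 hc
    have hnorm : ‖c.toReal • θ‖ = c.toReal := by
      rw [norm_smul, hθ, mul_one, Real.norm_of_nonneg hpos.le]
    simpa [hnorm, ENNReal.ofReal_toReal hc, inv_smul_smul₀ hpos.ne'] using h (c.toReal • θ)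
  · rcases eq_or_ne x 0 with rfl | hx
    · simpa using hQ 0
    exact h _ (norm_smul_inv_norm (𝕜 := ℝ) hx) _ ENNReal.ofReal_ne_top

theorem IsStarSet.starConvex {d : ℕ} {A : Set (EuclideanSpace ℝ (Fin d))} (hA : IsStarSet A) :
    StarConvex ℝ 0 A :=
  starConvex_zero_iff.2 fun a ha _ ht0 ht1 => hA.2 a ha _ ht0 ht1

theorem IsStarSet.zero_mem {d : ℕ} {A : Set (EuclideanSpace ℝ (Fin d))} (hA : IsStarSet A) :
    (0 : EuclideanSpace ℝ (Fin d)) ∈ A :=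
  hA.starConvex.mem hA.1

theorem IsStarSet.smul_mem_of_le {d : ℕ} {A : Set (EuclideanSpace ℝ (Fin d))} (hA : IsStarSet A)
    {θ : EuclideanSpace ℝ (Fin d)} {s r : ℝ} (hs : 0 ≤ s) (hsr : s ≤ r) (hr : r • θ ∈ A) :
    s • θ ∈ A := by
  rcases hs.eq_or_lt with rfl | hs
  · simpa using hA.zero_mem
  have hr0 : 0 < r := hs.trans_le hsr
  simpa [smul_smul, div_mul_cancel₀ _ hr0.ne'] using
    hA.starConvex.smul_mem hr (div_nonneg hs.le hr0.le) ((div_le_one hr0).2 hsr)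

theorem IsStarBody.smul_mem_iff {d : ℕ} {A : Set (EuclideanSpace ℝ (Fin d))} (hA : IsStarBody A)
    {θ : EuclideanSpace ℝ (Fin d)} (hθ : ‖θ‖ = 1) {s : ℝ} (hs : 0 ≤ s) :
    s • θ ∈ A ↔ ENNReal.ofReal s ≤ radialFn A θ := by
  refine ⟨fun h => le_sSup ⟨s, ⟨hs, h⟩, rfl⟩, fun h => ?_⟩
  rcases h.lt_or_eq with hlt | heq
  · obtain ⟨_, ⟨r, ⟨-, hr⟩, rfl⟩, hsr⟩ := lt_sSup_iff.1 hlt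
    exact hA.1.smul_mem_of_le hs (ENNReal.ofReal_lt_ofReal_iff'.1 hsr).1.le hr
  · have hmem := hA.2 θ hθ (heq ▸ ENNReal.ofReal_ne_top)
    rwa [← heq, ENNReal.toReal_ofReal hs] at hmem

theorem IsStarBody.radialDist_eq {d : ℕ} {A : Set (EuclideanSpace ℝ (Fin d))}
    (hA : IsStarBody A) (x : EuclideanSpace ℝ (Fin d)) :
    radialDist x A = (ENNReal.ofReal ‖x‖ - radialFn A (‖x‖⁻¹ • x)).toReal := by
  rcases eq_or_ne x 0 with rfl | hx
  · simp [radialDist, hA.1.zero_mem]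
  have hmem : x ∈ A ↔ ENNReal.ofReal ‖x‖ ≤ radialFn A (‖x‖⁻¹ • x) := by
    have hθ : ‖‖x‖⁻¹ • x‖ = 1 := norm_smul_inv_norm (𝕜 := ℝ) hx
    rw [← hA.smul_mem_iff hθ (norm_nonneg x), smul_inv_smul₀ (norm_ne_zero_iff.2 hx)]
  by_cases hxA : x ∈ A
  · rw [radialDist, if_pos hxA, tsub_eq_zero_of_le (hmem.1 hxA), ENNReal.toReal_zero]
  · rw [radialDist, if_neg hxA, ENNReal.toReal_sub_of_le (not_le.1 (hxA ∘ hmem.2)).le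
      ENNReal.ofReal_ne_top, ENNReal.toReal_ofReal (norm_nonneg x)]

theorem radialWijsman_iff_pointwise_radialFn_general {d : ℕ} {ι : Type*} (l : Filter ι)
    (A : ι → Set (EuclideanSpace ℝ (Fin d)))
    (B : Set (EuclideanSpace ℝ (Fin d)))
    (hA : ∀ i, IsStarBody (A i)) (hB : IsStarBody B) :
    (∀ x : EuclideanSpace ℝ (Fin d),
        Filter.Tendsto (fun i => radialDist x (A i)) l (nhds (radialDist x B))) ↔
      (∀ θ : EuclideanSpace ℝ (Fin d), ‖θ‖ = 1 →
        Filter.Tendsto (fun i => radialFn (A i) θ) l (nhds (radialFn B θ))) := by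
  have hfin : ∀ (C : Set (EuclideanSpace ℝ (Fin d))) x,
      ENNReal.ofReal ‖x‖ - radialFn C (‖x‖⁻¹ • x) ≠ ⊤ :=
    fun _ _ => ne_top_of_le_ne_top ENNReal.ofReal_ne_top tsub_le_self
  simp only [(hA _).radialDist_eq, hB.radialDist_eq,
    ENNReal.tendsto_toReal_iff (fun _ => hfin _ _) (hfin _ _)]
  rw [forall_polar_iff (Q := fun c θ => Tendsto (fun i => c - radialFn (A i) θ) l
    (𝓝 (c - radialFn B θ))) (fun _ => by simpa using tendsto_const_nhds)]
  exact forall₂_congr fun _ _ => ENNReal.tendsto_iff_forall_tendsto_sub_left.symm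

theorem radialWijsman_iff_pointwise_radialFn {d : ℕ} {ι : Type*} (l : Filter ι)
    [l.NeBot] (A : ι → Set (EuclideanSpace ℝ (Fin d)))
    (B : Set (EuclideanSpace ℝ (Fin d)))
    (hA : ∀ i, IsStarBody (A i)) (hB : IsStarBody B) :
    (∀ x : EuclideanSpace ℝ (Fin d),
        Filter.Tendsto (fun i => radialDist x (A i)) l (nhds (radialDist x B))) ↔
      (∀ θ : EuclideanSpace ℝ (Fin d), ‖θ‖ = 1 →
        Filter.Tendsto (fun i => radialFn (A i) θ) l (nhds (radialFn B θ))) :=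
  radialWijsman_iff_pointwise_radialFn_general l A B hA hB
end
end

section
/- The family of bounded star bodies is open in the space of star bodies in ℝ^d with the radial Attouch–Wets distance; moreover if A ⊆ j₀B₂^d and d_{AW^r}(A,X) < 1/(2j₀) then X ⊆ 2j₀B₂^d. -/
open scoped ENNReal

noncomputable section

/-- The radial Attouch–Wets distance between star bodies. -/
def dAWr {d : ℕ} (A₁ A₂ : Set (EuclideanSpace ℝ (Fin d))) : ℝ :=
  ⨆ j : ℕ, min (1 / ((j : ℝ) + 1))
    (⨆ x : Metric.closedBall (0 : EuclideanSpace ℝ (Fin d)) ((j : ℝ) + 1),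
      |radialDist (x : EuclideanSpace ℝ (Fin d)) A₁ -
        radialDist (x : EuclideanSpace ℝ (Fin d)) A₂|)

/-!
If `A ⊆ j₀ B` and some `x ∈ X` had `‖x‖ > 2 j₀`, then shrinking `x` inside the star set `X` gives a
point `y ∈ X` with `‖y‖ = 2 j₀`, at radial distance `0` from `X` but at least `j₀` from `A`.
The term `j = 2 j₀` of the supremum defining `d_{AW^r}(A, X)` is then at least
`min (1 / (2 j₀)) j₀ = 1 / (2 j₀)`. Openness follows by taking `j₀ ≥ 1` with `A ⊆ j₀ B`.
-/

namespace IsStarSet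

variable {d : ℕ} {A : Set (EuclideanSpace ℝ (Fin d))}

theorem zero_mem_s14 (hA : IsStarSet A) : (0 : EuclideanSpace ℝ (Fin d)) ∈ A := by
  obtain ⟨⟨a, ha⟩, hscale⟩ := hA
  simpa using hscale a ha 0 le_rfl zero_le_one

theorem smul_mem_of_le_s14 (hA : IsStarSet A) {θ : EuclideanSpace ℝ (Fin d)} {r s : ℝ}
    (hs : 0 ≤ s) (hsr : s ≤ r) (hr : r • θ ∈ A) : s • θ ∈ A := by
  rcases hs.eq_or_lt with rfl | hs_pos
  · simpa using hA.zero_mem_s14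
  have hr_pos : 0 < r := hs_pos.trans_le hsr
  have hscaled := hA.2 _ hr (s / r) (by positivity) ((div_le_one hr_pos).2 hsr)
  rwa [smul_smul, div_mul_cancel₀ s hr_pos.ne'] at hscaled

end IsStarSet

section RadialDist

variable {d : ℕ} {A B : Set (EuclideanSpace ℝ (Fin d))}

theorem radialFn_le_ofReal {θ : EuclideanSpace ℝ (Fin d)} {c : ℝ}
    (h : ∀ r : ℝ, 0 ≤ r → r • θ ∈ A → r ≤ c) : radialFn A θ ≤ ENNReal.ofReal c := by
  refine sSup_le ?_
  rintro _ ⟨r, ⟨hr, hrA⟩, rfl⟩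
  exact ENNReal.ofReal_le_ofReal (h r hr hrA)

theorem radialFn_le_of_subset_closedBall {θ : EuclideanSpace ℝ (Fin d)} {R : ℝ}
    (hA : A ⊆ Metric.closedBall 0 R) (hθ : ‖θ‖ = 1) : radialFn A θ ≤ ENNReal.ofReal R :=
  radialFn_le_ofReal fun r hr hrA => by
    simpa [norm_smul, hθ, abs_of_nonneg hr] using hA hrA

theorem radialDist_of_mem {x : EuclideanSpace ℝ (Fin d)} (hx : x ∈ A) : radialDist x A = 0 :=
  if_pos hx

theorem radialDist_le_norm (x : EuclideanSpace ℝ (Fin d)) : radialDist x A ≤ ‖x‖ := by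
  unfold radialDist
  split_ifs
  · exact norm_nonneg x
  · linarith [ENNReal.toReal_nonneg (a := radialFn A (‖x‖⁻¹ • x))]

theorem radialDist_nonneg (hA : IsStarSet A) (x : EuclideanSpace ℝ (Fin d)) :
    0 ≤ radialDist x A := by
  unfold radialDist
  split_ifs with hx
  · exact le_rfl
  have hx_pos : 0 < ‖x‖ := norm_pos_iff.2 fun h => hx (h ▸ hA.zero_mem_s14)
  -- `x = ‖x‖ • (x / ‖x‖) ∉ A`, so no larger multiple of `x / ‖x‖` lies in `A` either
  have hρ : radialFn A (‖x‖⁻¹ • x) ≤ ENNReal.ofReal ‖x‖ := by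
    refine radialFn_le_ofReal fun r hr hrA => le_of_not_gt fun hlt => hx ?_
    simpa [smul_smul, hx_pos.ne'] using hA.smul_mem_of_le_s14 (norm_nonneg x) hlt.le hrA
  linarith [ENNReal.toReal_le_of_le_ofReal (norm_nonneg x) hρ]

theorem sub_le_radialDist_of_subset_closedBall {x : EuclideanSpace ℝ (Fin d)} {R : ℝ}
    (hR : 0 ≤ R) (hA : A ⊆ Metric.closedBall 0 R) (hx : x ∉ A) (hx₀ : x ≠ 0) :
    ‖x‖ - R ≤ radialDist x A := by
  have hρ := radialFn_le_of_subset_closedBall (θ := ‖x‖⁻¹ • x) hA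
    (by rw [norm_smul, norm_inv, norm_norm, inv_mul_cancel₀ (norm_ne_zero_iff.2 hx₀)])
  rw [radialDist, if_neg hx]
  linarith [ENNReal.toReal_le_of_le_ofReal hR hρ]

theorem abs_radialDist_sub_le (hA : IsStarSet A) (hB : IsStarSet B)
    (x : EuclideanSpace ℝ (Fin d)) : |radialDist x A - radialDist x B| ≤ ‖x‖ :=
  abs_sub_le_of_nonneg_of_le (radialDist_nonneg hA x) (radialDist_le_norm x)
    (radialDist_nonneg hB x) (radialDist_le_norm x)

theorem min_le_dAWr (hA : IsStarSet A) (hB : IsStarSet B) (j : ℕ)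
    {x : EuclideanSpace ℝ (Fin d)} (hx : ‖x‖ ≤ j + 1) :
    min (1 / ((j : ℝ) + 1)) |radialDist x A - radialDist x B| ≤ dAWr A B := by
  have hinner : BddAbove (Set.range fun z : Metric.closedBall (0 : EuclideanSpace ℝ (Fin d))
      ((j : ℝ) + 1) => |radialDist (z : EuclideanSpace ℝ (Fin d)) A - radialDist z B|) := by
    refine ⟨(j : ℝ) + 1, ?_⟩
    rintro _ ⟨⟨z, hz⟩, rfl⟩
    exact (abs_radialDist_sub_le hA hB z).trans (by simpa using hz)
  have houter : BddAbove (Set.range fun i : ℕ => min (1 / ((i : ℝ) + 1))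
      (⨆ z : Metric.closedBall (0 : EuclideanSpace ℝ (Fin d)) ((i : ℝ) + 1),
        |radialDist (z : EuclideanSpace ℝ (Fin d)) A - radialDist z B|)) := by
    refine ⟨1, ?_⟩
    rintro _ ⟨i, rfl⟩
    exact (min_le_left _ _).trans ((div_le_one (by positivity)).2 (by simp))
  calc min (1 / ((j : ℝ) + 1)) |radialDist x A - radialDist x B|
      ≤ min (1 / ((j : ℝ) + 1))
          (⨆ z : Metric.closedBall (0 : EuclideanSpace ℝ (Fin d)) ((j : ℝ) + 1),
            |radialDist (z : EuclideanSpace ℝ (Fin d)) A - radialDist z B|) :=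
        min_le_min_left _ (le_ciSup hinner ⟨x, by simpa using hx⟩)
    _ ≤ dAWr A B := le_ciSup houter j

end RadialDist

theorem subset_closedBall_two_mul_of_dAWr_lt {d : ℕ} {A X : Set (EuclideanSpace ℝ (Fin d))}
    {j₀ : ℕ} (hj₀ : 1 ≤ j₀) (hA : IsStarSet A) (hX : IsStarSet X)
    (hAj₀ : A ⊆ Metric.closedBall 0 (j₀ : ℝ)) (hd : dAWr A X < 1 / (2 * (j₀ : ℝ))) :
    X ⊆ Metric.closedBall 0 (2 * (j₀ : ℝ)) := by
  have hj₀R : (1 : ℝ) ≤ j₀ := by exact_mod_cast hj₀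
  intro x hx
  rw [Metric.mem_closedBall, dist_zero_right]
  by_contra! hx_far
  have hx_pos : 0 < ‖x‖ := by linarith
  set y := (2 * (j₀ : ℝ) / ‖x‖) • x with hy
  have hy_norm : ‖y‖ = 2 * j₀ := by
    rw [hy, norm_smul, Real.norm_of_nonneg (by positivity), div_mul_cancel₀ _ hx_pos.ne']
  have hyX : y ∈ X := hX.2 x hx _ (by positivity) ((div_le_one hx_pos).2 hx_far.le)
  have hyA : y ∉ A := fun h => by
    have := hAj₀ h
    rw [Metric.mem_closedBall, dist_zero_right, hy_norm] at this
    linarith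
  have hdist : (j₀ : ℝ) ≤ radialDist y A := by
    have := sub_le_radialDist_of_subset_closedBall (by positivity) hAj₀ hyA
      (norm_pos_iff.1 (by rw [hy_norm]; positivity))
    linarith
  have hj : ((2 * j₀ - 1 : ℕ) : ℝ) + 1 = 2 * j₀ := by
    rw [Nat.cast_sub (by omega)]; push_cast; ring
  have hterm := min_le_dAWr hA hX (2 * j₀ - 1) (x := y) (by rw [hj, hy_norm])
  rw [hj, radialDist_of_mem hyX, sub_zero, abs_of_nonneg (radialDist_nonneg hA y)] at hterm
  have hsmall : 1 / (2 * (j₀ : ℝ)) ≤ radialDist y A :=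
    ((div_le_one (by positivity)).2 (by linarith)).trans (hj₀R.trans hdist)
  linarith [min_eq_left hsmall]

theorem bounded_starBodies_open_in_dAWr {d : ℕ} :
    (∀ A : Set (EuclideanSpace ℝ (Fin d)), IsStarBody A → Bornology.IsBounded A →
      ∃ ε : ℝ, 0 < ε ∧ ∀ X : Set (EuclideanSpace ℝ (Fin d)), IsStarBody X →
        dAWr A X < ε → Bornology.IsBounded X) ∧
    (∀ (A X : Set (EuclideanSpace ℝ (Fin d))) (j₀ : ℕ), 1 ≤ j₀ →
      IsStarBody A → IsStarBody X → A ⊆ Metric.closedBall 0 (j₀ : ℝ) →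
      dAWr A X < 1 / (2 * (j₀ : ℝ)) → X ⊆ Metric.closedBall 0 (2 * (j₀ : ℝ))) := by
  refine ⟨fun A hA hA_bdd => ?_, fun A X j₀ hj₀ hA hX hAj₀ hd =>
    subset_closedBall_two_mul_of_dAWr_lt hj₀ hA.1 hX.1 hAj₀ hd⟩
  obtain ⟨R, hR⟩ := hA_bdd.subset_closedBall 0
  set j₀ : ℕ := max 1 ⌈R⌉₊
  have hRj₀ : R ≤ j₀ := (Nat.le_ceil R).trans (by exact_mod_cast le_max_right 1 ⌈R⌉₊)
  refine ⟨1 / (2 * (j₀ : ℝ)), by positivity, fun X hX hd => ?_⟩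
  exact Metric.isBounded_closedBall.subset <| subset_closedBall_two_mul_of_dAWr_lt
    (le_max_left _ _) hA.1 hX.1 (hR.trans (Metric.closedBall_subset_closedBall hRj₀)) hd
end
end
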